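/- Let Ω ∈ (0, π) and x(t) = e^{iλt} for some λ ∈ [−Ω, Ω]. With N a positive even integer satisfying N > Ω/(π−Ω), g the 1-periodic extension of πN/t from [N, N+1), and coefficients a_k(t) as in the modified interpolation formula (a_m(t) = 1 − g(t)/π; a_k(t) = (t−m)sin(g(t)(k−m))/(π(k−m)(k−t)) for k ≠ m, t ∈ [N+m, N+m+1)), we have e^{iλt} = ∑_{k∈ℤ} a_k(t)·e^{iλk} for every t ∈ ℝ, with absolute convergence. -/

import Mathlib

/-!
Fix a non-integer `t`, put `M = m t`, `s = t - M ∈ (N, N + 1)` and `G = g t = π N / s`, so that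
`Ω < G < π`. The function `E` on `[-π, π]` equal to `e^{ixt}` for `|x| ≤ G` and to `e^{ixM}`
otherwise is continuous and `2π`-periodic, since `G s = π N ∈ 2πℤ`. Splitting `[-π, π]` at `±G`
shows that its Fourier coefficients are exactly the `a_k(t)`, which are `O(k⁻²)`. Hence the Fourier
series of `E` converges to `E` everywhere, and at `x = λ` this is the claimed expansion. For integer
`t` the coefficients `a_k(t)` form the Kronecker delta at `t`.
-/

open Real
open scoped Complex
open Complex (I)

lemma integral_exp_I_mul_eq_two_mul_sinc (G c : ℝ) :
    ∫ x in -G..G, cexp (I * x * c) = 2 * G * sinc (G * c) := by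
  rcases eq_or_ne c 0 with rfl | hc
  · simp; ring
  rcases eq_or_ne G 0 with rfl | hG
  · simp
  have hcC : (c : ℂ) ≠ 0 := by exact_mod_cast hc
  have hGC : (G : ℂ) ≠ 0 := by exact_mod_cast hG
  simp_rw [mul_right_comm I, integral_exp_mul_complex (mul_ne_zero Complex.I_ne_zero hcC),
    sinc_of_ne_zero (mul_ne_zero hG hc)]
  push_cast
  rw [Complex.sin]
  field_simp
  linear_combination (cexp (I * c * G) - cexp (-(I * c * G))) * Complex.I_sq

/-- The auxiliary function `E(t, ·)` of the paper is `splicedExp (g t) t (m t)`. -/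
noncomputable def splicedExp (G t u x : ℝ) : ℂ :=
  if |x| ≤ G then cexp (I * x * t) else cexp (I * x * u)

section SplicedExp

variable {G t u : ℝ}

lemma splicedExp_of_le_abs {x : ℝ} (hG : cexp (I * G * (t - u)) = 1) (hx : G ≤ |x|) :
    splicedExp G t u x = cexp (I * x * u) := by
  rw [splicedExp]
  split_ifs with hxG
  · have hsplit : cexp (I * x * t) = cexp (I * x * u) * cexp (I * x * (t - u)) := by
      rw [← Complex.exp_add]; ring_nf
    rcases eq_or_eq_neg_of_abs_eq (le_antisymm hxG hx) with rfl | rfl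
    · rw [hsplit, hG, mul_one]
    · rw [hsplit, Complex.ofReal_neg, show I * -(G : ℂ) * (t - u) = -(I * G * (t - u)) by ring,
        Complex.exp_neg, hG, inv_one, mul_one]
  · rfl

lemma continuous_splicedExp (hG : cexp (I * G * (t - u)) = 1) :
    Continuous (splicedExp G t u) :=
  continuous_if_le continuous_abs continuous_const (by fun_prop) (by fun_prop)
    fun x hx => by rw [← splicedExp_of_le_abs hG hx.ge, splicedExp, if_pos hx.le]

lemma integral_splicedExp (hG0 : 0 ≤ G) (hGπ : G ≤ π) (hG : cexp (I * G * (t - u)) = 1) :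
    ∫ x in -π..π, splicedExp G t u x =
      2 * π * sinc (π * u) + 2 * G * (sinc (G * t) - sinc (G * u)) := by
  have hE : ∀ a b, IntervalIntegrable (splicedExp G t u) MeasureTheory.volume a b :=
    fun _ _ => (continuous_splicedExp hG).intervalIntegrable _ _
  have he : ∀ a b, IntervalIntegrable (fun x : ℝ => cexp (I * x * u)) MeasureTheory.volume a b :=
    fun _ _ => (by fun_prop : Continuous fun x : ℝ => cexp (I * x * u)).intervalIntegrable _ _
  have hleft : ∫ x in -π..-G, splicedExp G t u x = ∫ x in -π..-G, cexp (I * x * u) :=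
    intervalIntegral.integral_congr fun x hx => splicedExp_of_le_abs hG <| by
      rw [Set.uIcc_of_le (by linarith)] at hx; exact le_abs.mpr (Or.inr (by linarith [hx.2]))
  have hright : ∫ x in G..π, splicedExp G t u x = ∫ x in G..π, cexp (I * x * u) :=
    intervalIntegral.integral_congr fun x hx => splicedExp_of_le_abs hG <| by
      rw [Set.uIcc_of_le hGπ] at hx; exact le_abs.mpr (Or.inl hx.1)
  have hmid : ∫ x in -G..G, splicedExp G t u x = ∫ x in -G..G, cexp (I * x * t) :=
    intervalIntegral.integral_congr fun x hx => by
      rw [Set.uIcc_of_le (by linarith)] at hx; exact if_pos (abs_le.mpr hx)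
  have hsplit : ∀ f : ℝ → ℂ, (∀ a b, IntervalIntegrable f MeasureTheory.volume a b) →
      ∫ x in -π..π, f x = (∫ x in -π..-G, f x) + (∫ x in -G..G, f x) + ∫ x in G..π, f x :=
    fun f hf => by
      rw [intervalIntegral.integral_add_adjacent_intervals (hf _ _) (hf _ _),
        intervalIntegral.integral_add_adjacent_intervals (hf _ _) (hf _ _)]
  rw [hsplit _ hE, hleft, hmid, hright]
  linear_combination -hsplit _ he + integral_exp_I_mul_eq_two_mul_sinc π u +
    integral_exp_I_mul_eq_two_mul_sinc G t - integral_exp_I_mul_eq_two_mul_sinc G u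

lemma exp_neg_mul_splicedExp (x c : ℝ) :
    cexp (-(I * x * c)) * splicedExp G t u x = splicedExp G (t - c) (u - c) x := by
  unfold splicedExp
  split_ifs <;> rw [← Complex.exp_add] <;> push_cast <;> ring_nf

local instance : Fact (0 < 2 * π) := ⟨two_pi_pos⟩

noncomputable def splicedExpCoeff (G t u : ℝ) (n : ℤ) : ℝ :=
  sinc (π * (u - n)) + G / π * (sinc (G * (t - n)) - sinc (G * (u - n)))

lemma fourierCoeff_liftIco_splicedExp (hG0 : 0 ≤ G) (hGπ : G ≤ π)
    (hG : cexp (I * G * (t - u)) = 1) (n : ℤ) :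
    fourierCoeff (AddCircle.liftIco (2 * π) (-π) (splicedExp G t u)) n =
      splicedExpCoeff G t u n := by
  have hG' : cexp (I * G * (((t - n : ℝ) : ℂ) - (u - n : ℝ))) = 1 := by
    push_cast; rwa [sub_sub_sub_cancel_right]
  rw [fourierCoeff_liftIco_eq, fourierCoeffOn_eq_integral, show -π + 2 * π - -π = 2 * π by ring,
    show -π + 2 * π = π by ring]
  simp_rw [fourier_coe_apply, smul_eq_mul]
  rw [intervalIntegral.integral_congr (g := splicedExp G (t - n) (u - n)) fun x _ => by
      rw [← exp_neg_mul_splicedExp]; congr 2; push_cast; field_simp,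
    integral_splicedExp hG0 hGπ hG', Complex.real_smul, splicedExpCoeff]
  push_cast
  field_simp

lemma hasSum_splicedExpCoeff_mul_exp {x : ℝ} {M : ℤ} (hG0 : 0 ≤ G) (hGπ : G < π)
    (hG : cexp (I * G * (t - M)) = 1) (hsum : Summable (splicedExpCoeff G t M)) (hx : |x| ≤ G) :
    HasSum (fun n : ℤ => (splicedExpCoeff G t M n : ℂ) * cexp (I * x * n)) (cexp (I * x * t)) := by
  have hperiodic : splicedExp G t M (-π) = splicedExp G t M (-π + 2 * π) := by
    rw [show -π + 2 * π = π by ring,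
      splicedExp_of_le_abs hG (by rw [abs_neg, abs_of_pos pi_pos]; exact hGπ.le),
      splicedExp_of_le_abs hG (by rw [abs_of_pos pi_pos]; exact hGπ.le),
      Complex.exp_eq_exp_iff_exists_int]
    exact ⟨-M, by push_cast; ring⟩
  let F : C(AddCircle (2 * π), ℂ) :=
    ⟨_, AddCircle.liftIco_continuous hperiodic (continuous_splicedExp hG).continuousOn⟩
  have hcoeff : fourierCoeff F = fun n => (splicedExpCoeff G t M n : ℂ) :=
    funext (fourierCoeff_liftIco_splicedExp hG0 hGπ.le hG)
  have hFx : F x = cexp (I * x * t) := by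
    obtain ⟨hx₁, hx₂⟩ := abs_le.mp hx
    rw [ContinuousMap.coe_mk, AddCircle.liftIco_coe_apply ⟨by linarith, by linarith⟩, splicedExp,
      if_pos hx]
  have hF := has_pointwise_sum_fourier_series_of_summable
    (hcoeff ▸ Complex.summable_ofReal.mpr hsum) x
  rw [hFx, hcoeff] at hF
  refine hF.congr_fun fun n => ?_
  rw [fourier_coe_apply, smul_eq_mul]
  congr 2
  push_cast
  field_simp

end SplicedExp

/-- For non-integer `t` the paper's coefficient `a_k(t)` is `samplingCoeff (g t) t (m t) k`. -/
noncomputable def samplingCoeff (G t : ℝ) (M k : ℤ) : ℝ :=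
  if k = M then 1 - G / π
  else (t - M) * Real.sin (G * ((k : ℝ) - M)) / (π * ((k : ℝ) - M) * ((k : ℝ) - t))

lemma samplingCoeff_pi (t : ℝ) (M k : ℤ) : samplingCoeff π t M k = 0 := by
  rw [samplingCoeff]
  split_ifs
  · rw [div_self pi_ne_zero, sub_self]
  · rw [mul_comm π, ← Int.cast_sub, sin_int_mul_pi, mul_zero, zero_div]

lemma splicedExpCoeff_eq_samplingCoeff {G t : ℝ} {M r : ℤ} (hG : G ≠ 0) (ht : ∀ k : ℤ, t ≠ k)
    (hGs : G * (t - M) = 2 * π * r) (k : ℤ) :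
    splicedExpCoeff G t M k = samplingCoeff G t M k := by
  have htk : t - k ≠ 0 := sub_ne_zero.mpr (ht k)
  rw [splicedExpCoeff, samplingCoeff]
  split_ifs with hk
  · subst hk
    have hsin : Real.sin (G * (t - k)) = 0 := by
      rw [hGs, show 2 * π * r = ((2 * r : ℤ) : ℝ) * π by push_cast; ring, sin_int_mul_pi]
    rw [sub_self, mul_zero, mul_zero, sinc_zero, sinc_of_ne_zero (mul_ne_zero hG htk), hsin]
    ring
  · have hkM : (M : ℝ) - k ≠ 0 := sub_ne_zero.mpr (by exact_mod_cast Ne.symm hk)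
    have hsin : Real.sin (G * (t - k)) = Real.sin (G * (M - k)) := by
      rw [show G * (t - k) = G * (M - k) + r * (2 * π) by linear_combination hGs,
        sin_add_int_mul_two_pi]
    rw [show π * ((M : ℝ) - k) = ((M - k : ℤ) : ℝ) * π by push_cast; ring,
      sinc_of_ne_zero (mul_ne_zero (Int.cast_ne_zero.mpr (sub_ne_zero.mpr (Ne.symm hk))) pi_ne_zero),
      sin_int_mul_pi, sinc_of_ne_zero (mul_ne_zero hG htk), sinc_of_ne_zero (mul_ne_zero hG hkM),
      hsin, show G * ((k : ℝ) - M) = -(G * (M - k)) by ring, Real.sin_neg]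
    have hkt : (k : ℝ) - t ≠ 0 := by rw [← neg_sub]; exact neg_ne_zero.mpr htk
    have hkM' : (k : ℝ) - M ≠ 0 := by rw [← neg_sub]; exact neg_ne_zero.mpr hkM
    field_simp
    ring

lemma summable_inv_abs_sub_mul_abs_sub (a b : ℝ) :
    Summable fun n : ℤ => (|n - a| * |n - b|)⁻¹ := by
  have hsq : ∀ c : ℝ, Summable fun n : ℤ => (|n - c| ^ 2)⁻¹ := fun c => by
    simpa [sub_eq_add_neg] using (Real.summable_one_div_int_add_rpow (-c) 2).mpr one_lt_two
  refine Summable.of_nonneg_of_le (fun n => by positivity) (fun n => ?_) ((hsq a).add (hsq b))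
  rw [mul_inv, ← inv_pow, ← inv_pow]
  nlinarith [sq_nonneg (|(n : ℝ) - a|⁻¹ - |(n : ℝ) - b|⁻¹),
    inv_nonneg.mpr (abs_nonneg ((n : ℝ) - a)), inv_nonneg.mpr (abs_nonneg ((n : ℝ) - b))]

lemma summable_abs_samplingCoeff (G t : ℝ) (M : ℤ) :
    Summable fun k => |samplingCoeff G t M k| := by
  refine .of_norm_bounded_eventually
    ((summable_inv_abs_sub_mul_abs_sub M t).mul_left (|t - M| / π)) ?_
  filter_upwards [Filter.eventually_cofinite_ne M] with k hk
  rw [Real.norm_eq_abs, abs_abs, samplingCoeff, if_neg hk, abs_div, abs_mul, abs_mul, abs_mul,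
    abs_of_pos pi_pos]
  calc |t - M| * |Real.sin (G * (k - M))| / (π * |(k : ℝ) - M| * |(k : ℝ) - t|)
      ≤ |t - M| / (π * |(k : ℝ) - M| * |(k : ℝ) - t|) := by
        gcongr
        exact mul_le_of_le_one_right (abs_nonneg _) (abs_sin_le_one _)
    _ = |t - M| / π * (|(k : ℝ) - M| * |(k : ℝ) - t|)⁻¹ := by ring

theorem hasSum_samplingCoeff_mul_exp {G t x : ℝ} {M r : ℤ} (hG0 : 0 < G) (hGπ : G < π)
    (hGs : G * (t - M) = 2 * π * r) (ht : ∀ k : ℤ, t ≠ k) (hx : |x| ≤ G) :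
    HasSum (fun k : ℤ => (samplingCoeff G t M k : ℂ) * cexp (I * x * k)) (cexp (I * x * t)) := by
  have hcoeff : splicedExpCoeff G t M = samplingCoeff G t M :=
    funext (splicedExpCoeff_eq_samplingCoeff hG0.ne' ht hGs)
  have hG : cexp (I * G * (t - M)) = 1 := by
    have hGsC : (G : ℂ) * (t - M) = 2 * π * r := by exact_mod_cast hGs
    rw [← Complex.exp_int_mul_two_pi_mul_I r]
    congr 1
    linear_combination I * hGsC
  simpa only [hcoeff] using hasSum_splicedExpCoeff_mul_exp hG0.le hGπ hG
    (hcoeff ▸ (summable_abs_samplingCoeff G t M).of_abs) hx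

lemma norm_ofReal_mul_exp_I_mul_intCast (c x : ℝ) (k : ℤ) :
    ‖(c : ℂ) * cexp (I * x * k)‖ = |c| := by
  rw [norm_mul, Complex.norm_real, Real.norm_eq_abs, show I * x * k = I * ((x * k : ℝ) : ℂ) by
    push_cast; ring, Complex.norm_exp_I_mul_ofReal, mul_one]

lemma pi_mul_div_mem_Ioo {Ω N s : ℝ} (hΩ : 0 ≤ Ω) (hΩπ : Ω < π) (hNΩ : Ω / (π - Ω) < N)
    (hNs : N < s) (hsN : s < N + 1) : π * N / s ∈ Set.Ioo Ω π := by
  rw [div_lt_iff₀ (by linarith)] at hNΩ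
  have hs : 0 < s := by nlinarith
  rw [Set.mem_Ioo, lt_div_iff₀ hs, div_lt_iff₀ hs]
  constructor <;> nlinarith

theorem modified_sampling_exponential_general (Ω : ℝ) (hΩπ : Ω < π)
    (lam : ℝ) (hlam : |lam| ≤ Ω)
    (N : ℤ) (hN : 0 < N) (hNe : Even N) (hNΩ : (N : ℝ) > Ω / (π - Ω))
    (m : ℝ → ℤ) (hm : ∀ t : ℝ, m t = ⌊t⌋ - N)
    (g : ℝ → ℝ) (hg : ∀ t : ℝ, g t = π * N / (t - m t))
    (a : ℤ → ℝ → ℝ)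
    (ha : ∀ (k : ℤ) (t : ℝ), a k t =
      if t = (k : ℝ) then 1
      else if k = m t then 1 - g t / π
      else (t - m t) * Real.sin (g t * ((k : ℝ) - m t)) /
        (π * ((k : ℝ) - m t) * ((k : ℝ) - t))) :
    ∀ t : ℝ,
      Summable (fun k : ℤ => ‖(a k t : ℂ) * Complex.exp (Complex.I * lam * k)‖) ∧
      HasSum (fun k : ℤ => (a k t : ℂ) * Complex.exp (Complex.I * lam * k))
        (Complex.exp (Complex.I * lam * t)) := by
  intro t
  have hcoeff (k : ℤ) : a k t = if t = k then 1 else samplingCoeff (g t) t (m t) k := ha k t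
  suffices Summable (fun k => |a k t|) ∧
      HasSum (fun k : ℤ => (a k t : ℂ) * cexp (I * lam * k)) (cexp (I * lam * t)) from
    ⟨this.1.congr fun k => (norm_ofReal_mul_exp_I_mul_intCast _ _ _).symm, this.2⟩
  by_cases ht : ∃ j : ℤ, t = j
  · obtain ⟨j, rfl⟩ := ht
    have hgj : g j = π := by simp [hg, hm, hN.ne']
    have hδ (k : ℤ) : a k j = if k = j then 1 else 0 := by
      simp [hcoeff, hgj, samplingCoeff_pi, eq_comm]
    simp_rw [hδ]
    refine ⟨summable_abs_iff.mpr (hasSum_ite_eq j 1).summable,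
      (hasSum_ite_eq j (cexp (I * lam * j))).congr_fun fun k => ?_⟩
    split_ifs with hk <;> simp [hk]
  · simp only [not_exists] at ht
    have hΩ : 0 ≤ Ω := (abs_nonneg lam).trans hlam
    have hfloor : (⌊t⌋ : ℝ) < t := (Int.floor_le t).lt_of_ne (Ne.symm (ht _))
    have hs : N < t - m t ∧ t - m t < N + 1 := by
      rw [hm]; push_cast; constructor <;> linarith [Int.lt_floor_add_one t]
    obtain ⟨hΩG, hGπ⟩ : g t ∈ Set.Ioo Ω π :=
      hg t ▸ pi_mul_div_mem_Ioo hΩ hΩπ hNΩ hs.1 hs.2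
    obtain ⟨r, hr⟩ := hNe
    have hGs : g t * (t - m t) = 2 * π * r := by
      rw [hg, div_mul_cancel₀ _ (by linarith [(by exact_mod_cast hN : (0 : ℝ) < N)]), hr]
      push_cast; ring
    have hsampling (k : ℤ) : a k t = samplingCoeff (g t) t (m t) k := by rw [hcoeff, if_neg (ht k)]
    simp_rw [hsampling]
    exact ⟨summable_abs_samplingCoeff _ _ _,
      hasSum_samplingCoeff_mul_exp (hΩ.trans_lt hΩG) hGπ hGs ht (hlam.trans hΩG.le)⟩

theorem modified_sampling_exponential (Ω : ℝ) (hΩ0 : 0 < Ω) (hΩπ : Ω < π)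
    (lam : ℝ) (hlam : |lam| ≤ Ω)
    (N : ℤ) (hN : 0 < N) (hNe : Even N) (hNΩ : (N : ℝ) > Ω / (π - Ω))
    (m : ℝ → ℤ) (hm : ∀ t : ℝ, m t = ⌊t⌋ - N)
    (g : ℝ → ℝ) (hg : ∀ t : ℝ, g t = π * N / (t - m t))
    (a : ℤ → ℝ → ℝ)
    (ha : ∀ (k : ℤ) (t : ℝ), a k t =
      if t = (k : ℝ) then 1
      else if k = m t then 1 - g t / π
      else (t - m t) * Real.sin (g t * ((k : ℝ) - m t)) /
        (π * ((k : ℝ) - m t) * ((k : ℝ) - t))) :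
    ∀ t : ℝ,
      Summable (fun k : ℤ => ‖(a k t : ℂ) * Complex.exp (Complex.I * lam * k)‖) ∧
      HasSum (fun k : ℤ => (a k t : ℂ) * Complex.exp (Complex.I * lam * k))
        (Complex.exp (Complex.I * lam * t)) :=
  modified_sampling_exponential_general Ω hΩπ lam hlam N hN hNe hNΩ m hm g hg a ha
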